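/- For all n ≥ k ≥ 1, the sum of q^{vls(w)} over all RGFs w of length n with maximum letter k equals S_q(n,k). -/

import Mathlib

open Finset

variable {n : ℕ}

/-- Positions of leftmost occurrences of letters in the word `w`. -/
def Lset (w : Fin n → ℕ) : Finset (Fin n) :=
  Finset.univ.filter fun i => ∀ j, j < i → w j ≠ w i

/-- Positions of rightmost occurrences of letters in the word `w`. -/
def Rset (w : Fin n → ℕ) : Finset (Fin n) :=
  Finset.univ.filter fun i => ∀ j, i < j → w j ≠ w i

/-- The maximum letter of the word `w`. -/
def bk (w : Fin n → ℕ) : ℕ := Finset.univ.sup w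

/-- The (1-indexed) position of the rightmost `1` in `w`. -/
def pro (w : Fin n → ℕ) : ℕ :=
  (Finset.univ.filter fun i => w i = 1).sup fun i => (i : ℕ) + 1

def lsi (w : Fin n → ℕ) (i : Fin n) : ℕ :=
  ((Lset w).filter fun j => j < i ∧ w j < w i).card

def rsi (w : Fin n → ℕ) (i : Fin n) : ℕ :=
  ((Rset w).filter fun j => i < j ∧ w j < w i).card

def vlsi (w : Fin n → ℕ) (i : Fin n) : ℕ :=
  if i ∉ Rset w ∧ pro w < (i : ℕ) + 1 then lsi w i - 1
  else if i ∈ Rset w ∧ (i : ℕ) + 1 < pro w then lsi w i + 1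
  else lsi w i

def vrsi (w : Fin n → ℕ) (i : Fin n) : ℕ :=
  if i ∉ Rset w ∧ pro w < (i : ℕ) + 1 then rsi w i + 1
  else if i ∈ Rset w ∧ (i : ℕ) + 1 < pro w then rsi w i - 1
  else rsi w i

def ls (w : Fin n → ℕ) : ℕ := ∑ i, lsi w i
def rs (w : Fin n → ℕ) : ℕ := ∑ i, rsi w i
def vls (w : Fin n → ℕ) : ℕ := ∑ i, vlsi w i
def vrs (w : Fin n → ℕ) : ℕ := ∑ i, vrsi w i

/-- `w` is a restricted growth function: positive letters, `w₁ = 1`, and each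
letter is at most one more than the maximum of the preceding letters. -/
def IsRGF (w : Fin n → ℕ) : Prop :=
  (∀ i, 1 ≤ w i) ∧ (∀ i : Fin n, (i : ℕ) = 0 → w i = 1) ∧
    ∀ i : Fin n, 0 < (i : ℕ) → w i ≤ (Finset.univ.filter fun j => j < i).sup w + 1

/-- The ascent set of `w`. -/
def AscSet (w : Fin n → ℕ) : Finset (Fin n) :=
  Finset.univ.filter fun i => ∃ j : Fin n, (j : ℕ) = (i : ℕ) + 1 ∧ w i < w j

open Polynomial in
/-- The q-integer [k]_q. -/
noncomputable def qint (k : ℕ) : Polynomial ℚ := ∑ i ∈ Finset.range k, X ^ i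

open Polynomial in
/-- The q-Stirling number S_q(n,k). -/
noncomputable def Sq : ℕ → ℕ → Polynomial ℚ
  | 0, 0 => 1
  | 0, _ + 1 => 0
  | _ + 1, 0 => 0
  | n + 1, k + 1 => X ^ k * Sq n k + qint (k + 1) * Sq n (k + 1)

/-!
In an RGF `w`, `lsᵢ w = w i - 1`, every letter has exactly one rightmost occurrence, and the
rightmost `1` is one of them, at position `pro w`. Adding up the corrections that turn `ls` into
`vls` therefore gives `vls w + (n + 1) = ∑ i, (w i - 1) + pro w + bk w`, and it remains to show
`q ^ k * ∑ q ^ (∑ i, (w i - 1) + pro w) = q ^ (n + 1) * S_q(n, k)`. This follows by removing the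
last letter `a`: it contributes `a - 1` to the sum, appending `1` moves `pro` to `n + 1` while any
other letter leaves `pro` alone, and together with the classical
`∑ q ^ (∑ i, (w i - 1)) = S_q(n, k)` the resulting recursion is the recurrence of `S_q`.
-/

open Polynomial

variable {w : Fin n → ℕ}

theorem exists_mem_Lset_le (w : Fin n → ℕ) (i : Fin n) :
    ∃ j ∈ Lset w, j ≤ i ∧ w j = w i := by
  induction i using WellFoundedLT.induction with
  | _ i ih =>
    by_cases hi : i ∈ Lset w
    · exact ⟨i, hi, le_rfl, rfl⟩
    simp only [Lset, mem_filter, mem_univ, true_and, not_forall, not_not] at hi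
    obtain ⟨j, hji, hwj⟩ := hi
    obtain ⟨m, hm, hmj, hwm⟩ := ih j hji
    exact ⟨m, hm, hmj.trans hji.le, hwm.trans hwj⟩

theorem exists_mem_Rset_ge (w : Fin n → ℕ) (i : Fin n) :
    ∃ j ∈ Rset w, i ≤ j ∧ w j = w i := by
  induction i using WellFoundedGT.induction with
  | _ i ih =>
    by_cases hi : i ∈ Rset w
    · exact ⟨i, hi, le_rfl, rfl⟩
    simp only [Rset, mem_filter, mem_univ, true_and, not_forall, not_not] at hi
    obtain ⟨j, hij, hwj⟩ := hi
    obtain ⟨m, hm, hjm, hwm⟩ := ih j hij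
    exact ⟨m, hm, hij.le.trans hjm, hwm.trans hwj⟩

theorem injOn_Lset (w : Fin n → ℕ) : Set.InjOn w (Lset w) := by
  intro i hi j hj hij
  simp only [Lset, coe_filter, mem_univ, true_and, Set.mem_ofPred_eq] at hi hj
  by_contra hne
  rcases lt_or_gt_of_ne hne with h | h
  · exact hj i h hij
  · exact hi j h hij.symm

theorem injOn_Rset (w : Fin n → ℕ) : Set.InjOn w (Rset w) := by
  intro i hi j hj hij
  simp only [Rset, coe_filter, mem_univ, true_and, Set.mem_ofPred_eq] at hi hj
  by_contra hne
  rcases lt_or_gt_of_ne hne with h | h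
  · exact hi j h hij.symm
  · exact hj i h hij

theorem image_Rset (w : Fin n → ℕ) : (Rset w).image w = univ.image w := by
  refine (image_subset_image (subset_univ _)).antisymm fun v hv => ?_
  obtain ⟨i, -, rfl⟩ := mem_image.1 hv
  obtain ⟨j, hj, -, hwj⟩ := exists_mem_Rset_ge w i
  exact mem_image.2 ⟨j, hj, hwj⟩

theorem le_pro {i : Fin n} (h : w i = 1) : (i : ℕ) + 1 ≤ pro w :=
  le_sup (f := fun i : Fin n => (i : ℕ) + 1) (by simp [h])

theorem pro_le (w : Fin n → ℕ) : pro w ≤ n :=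
  Finset.sup_le fun i _ => i.isLt

theorem bk_snoc (w : Fin n → ℕ) (a : ℕ) :
    bk (Fin.snoc w a : Fin (n + 1) → ℕ) = max (bk w) a := by
  simp [bk, Fin.univ_castSuccEmb, sup_map, Function.comp_def, max_comm]

theorem sum_snoc_sub_one (w : Fin n → ℕ) (a : ℕ) :
    ∑ i, ((Fin.snoc w a : Fin (n + 1) → ℕ) i - 1) = ∑ i, (w i - 1) + (a - 1) := by
  simp [Fin.sum_univ_castSucc]

theorem pro_snoc_one (w : Fin n → ℕ) : pro (Fin.snoc w 1 : Fin (n + 1) → ℕ) = n + 1 :=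
  (pro_le _).antisymm (le_pro (i := Fin.last n) (by simp))

theorem pro_snoc_of_ne_one (w : Fin n → ℕ) {a : ℕ} (ha : a ≠ 1) :
    pro (Fin.snoc w a : Fin (n + 1) → ℕ) = pro w := by
  rw [pro, Fin.univ_castSuccEmb, filter_cons]
  simp [ha, filter_map, sup_map, pro, Function.comp_def]

theorem isRGF_iff : IsRGF w ↔ ∀ i, 1 ≤ w i ∧ w i ≤ (Iio i).sup w + 1 := by
  have hIio : ∀ i : Fin n, (univ.filter fun j => j < i) = Iio i := fun i => filter_gt_eq_Iio
  simp only [IsRGF, hIio]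
  constructor
  · rintro ⟨hpos, hfirst, hgrow⟩ i
    refine ⟨hpos i, ?_⟩
    rcases Nat.eq_zero_or_pos i with h | h
    · simp [hfirst i h]
    · exact hgrow i h
  · intro h
    refine ⟨fun i => (h i).1, fun i hi => ?_, fun i _ => (h i).2⟩
    have hempty : Iio i = ∅ := by ext j; simp [Fin.lt_def, hi]
    have := h i
    simp only [hempty, sup_empty, bot_eq_zero] at this
    omega

theorem isRGF_snoc_iff {a : ℕ} :
    IsRGF (Fin.snoc w a : Fin (n + 1) → ℕ) ↔ IsRGF w ∧ 1 ≤ a ∧ a ≤ bk w + 1 := by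
  simp only [isRGF_iff, Fin.forall_fin_succ', Fin.snoc_castSucc, Fin.snoc_last, Fin.Iio_castSucc,
    Fin.Iio_last_eq_map, sup_map, Fin.coe_castSuccEmb, Fin.snoc_comp_castSucc, bk]

namespace IsRGF

theorem exists_eq_of_le (hw : IsRGF w) {v : ℕ} (hv : 1 ≤ v) {i : Fin n} (hvi : v ≤ w i) :
    ∃ j ≤ i, w j = v := by
  induction i using WellFoundedLT.induction with
  | _ i ih =>
    rcases hvi.eq_or_lt with rfl | hlt
    · exact ⟨i, le_rfl, rfl⟩
    have hvsup : v ≤ (Iio i).sup w := by have := (isRGF_iff.1 hw i).2; omega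
    obtain ⟨j, hj, hvj⟩ := (Finset.le_sup_iff hv).1 hvsup
    obtain ⟨m, hmj, hm⟩ := ih j (mem_Iio.1 hj) hvj
    exact ⟨m, hmj.trans (mem_Iio.1 hj).le, hm⟩

theorem image_univ (hw : IsRGF w) : univ.image w = Icc 1 (bk w) := by
  ext v
  simp only [mem_image, mem_univ, true_and, mem_Icc]
  constructor
  · rintro ⟨i, rfl⟩
    exact ⟨(isRGF_iff.1 hw i).1, le_sup (mem_univ i)⟩
  · rintro ⟨hv, hvbk⟩
    obtain ⟨i, -, hvi⟩ := (Finset.le_sup_iff hv).1 hvbk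
    obtain ⟨j, -, hj⟩ := hw.exists_eq_of_le hv hvi
    exact ⟨j, hj⟩

theorem card_Rset (hw : IsRGF w) : #(Rset w) = bk w := by
  rw [← card_image_of_injOn (injOn_Rset w), image_Rset, hw.image_univ, Nat.card_Icc,
    Nat.add_sub_cancel]

theorem lsi_eq (hw : IsRGF w) (i : Fin n) : lsi w i = w i - 1 := by
  have himage : ((Lset w).filter fun j => j < i ∧ w j < w i).image w = Ico 1 (w i) := by
    ext v
    simp only [mem_image, mem_filter, mem_Ico]
    constructor
    · rintro ⟨j, ⟨-, -, hj⟩, rfl⟩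
      exact ⟨(isRGF_iff.1 hw j).1, hj⟩
    · rintro ⟨hv, hvi⟩
      obtain ⟨j, hji, rfl⟩ := hw.exists_eq_of_le hv hvi.le
      obtain ⟨m, hm, hmj, hwm⟩ := exists_mem_Lset_le w j
      have hmi : m ≠ i := by rintro rfl; omega
      exact ⟨m, ⟨hm, lt_of_le_of_ne (hmj.trans hji) hmi, by omega⟩, hwm⟩
  rw [lsi, ← card_image_of_injOn ((injOn_Lset w).mono (filter_subset _ _)), himage,
    Nat.card_Ico]

theorem exists_rightmost_one (hw : IsRGF w) (hn : 0 < n) :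
    ∃ i : Fin n, (i : ℕ) + 1 = pro w ∧ w i = 1 ∧ i ∈ Rset w := by
  have hone : (univ.filter fun i : Fin n => w i = 1).Nonempty :=
    ⟨⟨0, hn⟩, by simp [hw.2.1 ⟨0, hn⟩ rfl]⟩
  obtain ⟨i, hi, hpro⟩ := exists_mem_eq_sup _ hone fun i : Fin n => (i : ℕ) + 1
  have hwi : w i = 1 := (mem_filter.1 hi).2
  refine ⟨i, hpro.symm, hwi, mem_filter.2 ⟨mem_univ _, fun j hij hwj => ?_⟩⟩
  have hj : (j : ℕ) + 1 ≤ i + 1 := (le_pro (hwj.trans hwi)).trans_eq hpro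
  exact absurd hij (not_lt.2 (Fin.le_def.2 (by omega)))

theorem vls_add_eq (hw : IsRGF w) (hn : 0 < n) :
    vls w + (n + 1) = ∑ i, (w i - 1) + pro w + bk w := by
  obtain ⟨i₀, hi₀, hwi₀, hRi₀⟩ := hw.exists_rightmost_one hn
  have hpro_eq : ∀ i : Fin n, (i : ℕ) + 1 = pro w ↔ i = i₀ := fun i => by
    rw [Fin.ext_iff]; omega
  have hpoint : ∀ i : Fin n, vlsi w i + 1 + (if (i : ℕ) + 1 = pro w then 1 else 0) =
      (w i - 1) + (if (i : ℕ) < pro w then 1 else 0) + (if i ∈ Rset w then 1 else 0) := by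
    intro i
    have hls := hw.lsi_eq i
    have hpos := (isRGF_iff.1 hw i).1
    rw [vlsi]
    by_cases hii₀ : i = i₀
    · subst hii₀
      simp only [hRi₀, not_true_eq_false, false_and, true_and, if_false, if_true]
      split_ifs <;> omega
    have hne : (i : ℕ) + 1 ≠ pro w := (hpro_eq i).not.2 hii₀
    have hlast : w i ≠ 1 ∨ (i : ℕ) + 1 ≤ pro w := imp_iff_not_or.1 le_pro
    by_cases hR : i ∈ Rset w <;>
      simp only [hR, not_true_eq_false, not_false_eq_true, false_and, true_and, if_false,
        if_true] <;>
      split_ifs <;> omega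
  have hsum := Finset.sum_congr rfl fun i (_ : i ∈ univ) => hpoint i
  simp only [hpro_eq, sum_add_distrib, sum_ite_eq', mem_univ, if_true, sum_boole, Nat.cast_id,
    Fin.card_filter_val_lt, filter_mem_eq_inter, univ_inter, hw.card_Rset, sum_const,
    card_univ, Fintype.card_fin, smul_eq_mul, mul_one] at hsum
  rw [vls, min_eq_right (pro_le w)] at *
  omega

end IsRGF

open scoped Classical in
noncomputable def rgfs (n k : ℕ) : Finset (Fin n → ℕ) :=
  (Fintype.piFinset fun _ => Icc 1 k).filter fun w => IsRGF w ∧ bk w = k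

theorem mem_rgfs {k : ℕ} : w ∈ rgfs n k ↔ IsRGF w ∧ bk w = k := by
  simp only [rgfs, mem_filter, Fintype.mem_piFinset, mem_Icc, and_iff_right_iff_imp]
  rintro ⟨hw, rfl⟩ i
  exact ⟨(isRGF_iff.1 hw i).1, le_sup (mem_univ i)⟩

theorem snoc_succ_mem_rgfs_succ_iff {a k : ℕ} :
    (Fin.snoc w (a + 1) : Fin (n + 1) → ℕ) ∈ rgfs (n + 1) (k + 1) ↔
      (w, a) ∈ rgfs n (k + 1) ×ˢ range (k + 1) ∪ rgfs n k ×ˢ {k} := by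
  simp only [mem_union, mem_product, mem_range, mem_singleton, mem_rgfs, isRGF_snoc_iff, bk_snoc]
  by_cases hw : IsRGF w <;> simp only [hw, true_and, false_and, or_false]
  omega

theorem sum_rgfs_succ {M : Type*} [AddCommMonoid M] (f : (Fin (n + 1) → ℕ) → M) (k : ℕ) :
    ∑ w ∈ rgfs (n + 1) (k + 1), f w =
      ∑ v ∈ rgfs n (k + 1), ∑ a ∈ range (k + 1), f (Fin.snoc v (a + 1)) +
        ∑ v ∈ rgfs n k, f (Fin.snoc v (k + 1)) := by
  have hlast : ∀ w ∈ rgfs (n + 1) (k + 1),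
      Fin.snoc (Fin.init w) (w (Fin.last n) - 1 + 1) = w := by
    intro w hw
    rw [Nat.sub_add_cancel (isRGF_iff.1 (mem_rgfs.1 hw).1 (Fin.last n)).1, Fin.snoc_init_self]
  have hdisj : Disjoint (rgfs n (k + 1) ×ˢ range (k + 1)) (rgfs n k ×ˢ {k}) := by
    refine disjoint_left.2 fun p hp₁ hp₂ => ?_
    have := (mem_rgfs.1 (mem_product.1 hp₁).1).2.symm.trans (mem_rgfs.1 (mem_product.1 hp₂).1).2
    omega
  calc ∑ w ∈ rgfs (n + 1) (k + 1), f w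
      = ∑ p ∈ rgfs n (k + 1) ×ˢ range (k + 1) ∪ rgfs n k ×ˢ {k},
          f (Fin.snoc p.1 (p.2 + 1)) := by
        refine sum_nbij' (fun w => (Fin.init w, w (Fin.last n) - 1))
          (fun p => Fin.snoc p.1 (p.2 + 1)) (fun w hw => ?_)
          (fun p hp => snoc_succ_mem_rgfs_succ_iff.2 hp) hlast (by simp)
          (fun w hw => by rw [hlast w hw])
        rw [← snoc_succ_mem_rgfs_succ_iff, hlast w hw]
        exact hw
    _ = _ := by rw [sum_union hdisj, sum_product, sum_product]; simp

theorem rgfs_zero_zero : rgfs 0 0 = {![]} :=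
  eq_singleton_iff_unique_mem.2
    ⟨mem_rgfs.2 ⟨by simp [IsRGF], by simp [bk]⟩, fun _ _ => Subsingleton.elim _ _⟩

theorem rgfs_zero_succ (k : ℕ) : rgfs 0 (k + 1) = ∅ :=
  eq_empty_of_forall_notMem fun w hw => by simpa [bk] using (mem_rgfs.1 hw).2

theorem rgfs_succ_zero (n : ℕ) : rgfs (n + 1) 0 = ∅ := by
  refine eq_empty_of_forall_notMem fun w hw => ?_
  obtain ⟨hw, hbk⟩ := mem_rgfs.1 hw
  have := (isRGF_iff.1 hw 0).1.trans (le_sup (f := w) (mem_univ 0))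
  rw [← bk, hbk] at this
  omega

theorem sum_rgfs_X_pow_eq_Sq (n k : ℕ) :
    ∑ w ∈ rgfs n k, (X : ℚ[X]) ^ (∑ i, (w i - 1)) = Sq n k := by
  induction n generalizing k with
  | zero => cases k <;> simp [rgfs_zero_zero, rgfs_zero_succ, Sq]
  | succ n ih =>
    cases k with
    | zero => simp [rgfs_succ_zero, Sq]
    | succ k =>
      simp only [sum_rgfs_succ, sum_snoc_sub_one, add_tsub_cancel_right, pow_add, ← mul_sum,
        ← sum_mul, ih, Sq, qint]
      ring

theorem sum_range_X_pow_add_pro_snoc (v : Fin n → ℕ) (j : ℕ) :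
    ∑ a ∈ range (j + 2),
        (X : ℚ[X]) ^ (∑ i, ((Fin.snoc v (a + 1) : Fin (n + 1) → ℕ) i - 1) +
          pro (Fin.snoc v (a + 1) : Fin (n + 1) → ℕ)) =
      X ^ (∑ i, (v i - 1)) * X ^ (n + 1) +
        X ^ (∑ i, (v i - 1) + pro v) * (X * qint (j + 1)) := by
  have hpro : ∀ a, pro (Fin.snoc v (a + 1 + 1) : Fin (n + 1) → ℕ) = pro v :=
    fun a => pro_snoc_of_ne_one v (by omega)
  rw [sum_range_succ', add_comm, qint, mul_sum, mul_sum]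
  simp only [sum_snoc_sub_one, pro_snoc_one, hpro, add_tsub_cancel_right, zero_add, pow_add]
  exact congrArg₂ _ (by ring) (sum_congr rfl fun a _ => by ring)

theorem X_pow_mul_sum_rgfs_X_pow_add_pro (n k : ℕ) (hk : 1 ≤ k) :
    X ^ k * ∑ w ∈ rgfs n k, (X : ℚ[X]) ^ (∑ i, (w i - 1) + pro w) =
      X ^ (n + 1) * Sq n k := by
  induction n generalizing k with
  | zero =>
    obtain ⟨k, rfl⟩ := Nat.exists_eq_add_of_le' hk
    simp [rgfs_zero_succ, Sq]
  | succ n ih =>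
    obtain ⟨k, rfl⟩ := Nat.exists_eq_add_of_le' hk
    rw [sum_rgfs_succ]
    rcases k with _ | j
    · simp only [sum_range_one, sum_snoc_sub_one, pro_snoc_one, zero_add, add_tsub_cancel_right,
        pow_add, ← sum_mul, sum_rgfs_X_pow_eq_Sq, Sq, qint]
      ring
    · have hmax : ∀ v : Fin n → ℕ,
          pro (Fin.snoc v (j + 1 + 1) : Fin (n + 1) → ℕ) = pro v :=
        fun v => pro_snoc_of_ne_one v (by omega)
      have hqint : qint (j + 2) = qint (j + 1) + X ^ (j + 1) := sum_range_succ _ _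
      simp only [sum_range_X_pow_add_pro_snoc]
      simp only [sum_snoc_sub_one, hmax, add_tsub_cancel_right, add_right_comm _ (j + 1),
        pow_add _ _ (j + 1), sum_add_distrib, ← sum_mul, sum_rgfs_X_pow_eq_Sq, Sq, hqint]
      linear_combination (X * qint (j + 1)) * ih (j + 2) (by omega) +
        X ^ (j + 2) * ih (j + 1) (by omega)

open scoped Classical in
theorem sum_rgf_fin_eq_sum_rgfs {M : Type*} [AddCommMonoid M] (f : (Fin n → ℕ) → M)
    {N k : ℕ} (hk : k ≤ N) :
    ∑ w ∈ (univ : Finset (Fin n → Fin (N + 1))).filter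
        (fun w => IsRGF (fun i => (w i : ℕ)) ∧ bk (fun i => (w i : ℕ)) = k),
      f (fun i => (w i : ℕ)) = ∑ v ∈ rgfs n k, f v := by
  have hval : ∀ v ∈ rgfs n k, (fun i => (Fin.ofNat (N + 1) (v i) : ℕ)) = v := by
    intro v hv
    funext i
    have : v i ≤ bk v := le_sup (mem_univ i)
    rw [Fin.val_ofNat, Nat.mod_eq_of_lt (by rw [(mem_rgfs.1 hv).2] at this; omega)]
  refine sum_nbij' (fun w i => (w i : ℕ)) (fun v i => Fin.ofNat (N + 1) (v i))
    (fun w hw => mem_rgfs.2 (mem_filter.1 hw).2) (fun v hv => ?_) (fun w _ => by simp)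
    (fun v hv => hval v hv) (fun _ _ => rfl)
  refine mem_filter.2 ⟨mem_univ _, ?_⟩
  beta_reduce
  rw [hval v hv]
  exact mem_rgfs.1 hv

open scoped Classical in
/-- The sum of q^{vls(w)} over all RGFs of length n with maximum letter k is S_q(n,k). -/
theorem stmt8 (n k : ℕ) (hk : 1 ≤ k) (hn : k ≤ n) :
    ∑ w ∈ (Finset.univ : Finset (Fin n → Fin (n + 1))).filter
        (fun w => IsRGF (fun i => (w i : ℕ)) ∧ bk (fun i => (w i : ℕ)) = k),
      (Polynomial.X : Polynomial ℚ) ^ vls (fun i => (w i : ℕ)) = Sq n k := by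
  refine (sum_rgf_fin_eq_sum_rgfs (fun v => (X : ℚ[X]) ^ vls v) hn).trans
    (mul_left_cancel₀ (pow_ne_zero (n + 1) X_ne_zero) ?_)
  rw [← X_pow_mul_sum_rgfs_X_pow_add_pro n k hk, mul_sum, mul_sum]
  refine sum_congr rfl fun v hv => ?_
  obtain ⟨hrgf, rfl⟩ := mem_rgfs.1 hv
  rw [← pow_add, ← pow_add, add_comm (n + 1), hrgf.vls_add_eq (by omega)]
  ring
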